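/- Cancellation for the Chow weight structure: assuming the Tate twist −⟨1⟩ is a fully faithful weight-exact endofunctor of DM^{eff}_R, one has DM^{eff}_{R, w≤0} ∩ Obj(DM^{eff}_R⟨1⟩) = DM^{eff}_{R, w≤0}⟨1⟩ and DM^{eff}_{R, w≥0} ∩ Obj(DM^{eff}_R⟨1⟩) = DM^{eff}_{R, w≥0}⟨1⟩; consequently the analogous equality holds for hearts. -/

import Mathlib

open CategoryTheory CategoryTheory.Limits CategoryTheory.Pretriangulated

universe v u u'

variable (C : Type u) [Category.{v} C] [HasZeroObject C] [HasShift C ℤ]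
  [Preadditive C] [∀ n : ℤ, (shiftFunctor C n).Additive] [Pretriangulated C]

/-- A weight structure on a triangulated category `C`:
a pair of Karoubi-closed classes `le = C_{w≤0}` and `ge = C_{w≥0}` satisfying
semi-invariance with respect to translations, orthogonality and the existence of
weight decompositions. -/
structure WeightStructure where
  /-- the class `C_{w≤0}` -/
  le : Set C
  /-- the class `C_{w≥0}` -/
  ge : Set C
  /-- `C_{w≤0}` is Karoubi-closed (contains all retracts of its elements) -/
  le_retract : ∀ ⦃M N : C⦄, N ∈ le → ∀ (i : M ⟶ N) (r : N ⟶ M), i ≫ r = 𝟙 M → M ∈ le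
  /-- `C_{w≥0}` is Karoubi-closed -/
  ge_retract : ∀ ⦃M N : C⦄, N ∈ ge → ∀ (i : M ⟶ N) (r : N ⟶ M), i ≫ r = 𝟙 M → M ∈ ge
  /-- `C_{w≤0} ⊆ C_{w≤0}[1]`, i.e. `M ∈ C_{w≤0} → M[-1] ∈ C_{w≤0}` -/
  le_shift : ∀ ⦃M : C⦄, M ∈ le → M⟦(-1 : ℤ)⟧ ∈ le
  /-- `C_{w≥0}[1] ⊆ C_{w≥0}` -/
  ge_shift : ∀ ⦃M : C⦄, M ∈ ge → M⟦(1 : ℤ)⟧ ∈ ge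
  /-- orthogonality: `C_{w≤0} ⊥ C_{w≥0}[1]` -/
  orth : ∀ ⦃M N : C⦄, M ∈ le → N ∈ ge → ∀ f : M ⟶ N⟦(1 : ℤ)⟧, f = 0
  /-- weight decompositions -/
  decomp : ∀ M : C, ∃ (L R : C) (f : L ⟶ M) (g : M ⟶ R) (h : R ⟶ L⟦(1 : ℤ)⟧),
    Triangle.mk f g h ∈ (distTriang C) ∧ L ∈ le ∧ R⟦(-1 : ℤ)⟧ ∈ ge

namespace WeightStructure

variable {C} (w : WeightStructure C)

lemma mem_le_of_retract {M N : C} (h : Retract M N) (hN : N ∈ w.le) : M ∈ w.le :=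
  w.le_retract hN h.i h.r h.retract

lemma mem_ge_of_retract {M N : C} (h : Retract M N) (hN : N ∈ w.ge) : M ∈ w.ge :=
  w.ge_retract hN h.i h.r h.retract

lemma mem_le_of_iso {M N : C} (hM : M ∈ w.le) (e : M ≅ N) : N ∈ w.le :=
  w.mem_le_of_retract e.symm.retract hM

lemma mem_ge_of_iso {M N : C} (hM : M ∈ w.ge) (e : M ≅ N) : N ∈ w.ge :=
  w.mem_ge_of_retract e.symm.retract hM

lemma hom_eq_zero_of_mem_le_of_shift_mem_ge {M N : C} (hM : M ∈ w.le)
    (hN : N⟦(-1 : ℤ)⟧ ∈ w.ge) (f : M ⟶ N) : f = 0 := by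
  rw [← cancel_mono ((shiftNegShift N (1 : ℤ)).inv), zero_comp]
  exact w.orth hM hN _

variable (T : C ⥤ C) [T.Faithful] [T.CommShift ℤ] [T.IsTriangulated]

/-- In a weight decomposition `L ⟶ Y ⟶ R` the map `Y ⟶ R` becomes zero after applying `T`,
hence vanishes, so `Y` is a retract of `L`. -/
lemma mem_le_of_map_mem_le (hge : ∀ X ∈ w.ge, T.obj X ∈ w.ge) {Y : C}
    (hY : T.obj Y ∈ w.le) : Y ∈ w.le := by
  obtain ⟨L, R, f, g, _, hdist, hL, hR⟩ := w.decomp Y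
  have hTR : (T.obj R)⟦(-1 : ℤ)⟧ ∈ w.ge :=
    w.mem_ge_of_iso (hge _ hR) ((T.commShiftIso (-1 : ℤ)).app R)
  have hg : g = 0 :=
    T.map_injective (by rw [T.map_zero]; exact w.hom_eq_zero_of_mem_le_of_shift_mem_ge hY hTR _)
  obtain ⟨s, hs⟩ := Triangle.coyoneda_exact₂ _ hdist (𝟙 Y) ((Category.id_comp _).trans hg)
  exact w.mem_le_of_retract ⟨s, f, hs.symm⟩ hL

/-- In a weight decomposition `L ⟶ Y⟦1⟧ ⟶ R` the map `L ⟶ Y⟦1⟧` becomes zero after applying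
`T`, hence vanishes, so `Y⟦1⟧` is a retract of `R` and `Y` one of `R⟦-1⟧`. -/
lemma mem_ge_of_map_mem_ge (hle : ∀ X ∈ w.le, T.obj X ∈ w.le) {Y : C}
    (hY : T.obj Y ∈ w.ge) : Y ∈ w.ge := by
  obtain ⟨L, R, f, g, _, hdist, hL, hR⟩ := w.decomp (Y⟦(1 : ℤ)⟧)
  have hf : f = 0 := T.map_injective <| by
    rw [T.map_zero, ← cancel_mono (((T.commShiftIso (1 : ℤ)).app Y).hom), zero_comp]
    exact w.orth (hle _ hL) hY _
  obtain ⟨r, hr⟩ := Triangle.yoneda_exact₂ _ hdist (𝟙 _) ((Category.comp_id _).trans hf)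
  have hYR : Retract (Y⟦(1 : ℤ)⟧) R := ⟨g, r, hr.symm⟩
  exact w.mem_ge_of_retract ((shiftShiftNeg Y (1 : ℤ)).symm.retract.trans
    (hYR.map (shiftFunctor C (-1 : ℤ)))) hR

end WeightStructure

lemma CategoryTheory.Functor.mem_and_essImage_iff_exists_obj_iso {A B : Type*} [Category A]
    [Category B] (T : A ⥤ B) (P : Set A) (Q : Set B)
    (hQ : ∀ {X X' : B}, X ∈ Q → (X ≅ X') → X' ∈ Q)
    (hmap : ∀ Y ∈ P, T.obj Y ∈ Q) (hreflect : ∀ Y, T.obj Y ∈ Q → Y ∈ P) (X : B) :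
    (X ∈ Q ∧ T.essImage X) ↔ ∃ Y ∈ P, Nonempty (T.obj Y ≅ X) := by
  constructor
  · rintro ⟨hX, Y, ⟨e⟩⟩
    exact ⟨Y, hreflect Y (hQ hX e.symm), ⟨e⟩⟩
  · rintro ⟨Y, hY, ⟨e⟩⟩
    exact ⟨hQ (hmap Y hY) e, Y, ⟨e⟩⟩

theorem cancellation_for_weight_structure
    (w : WeightStructure C)
    (T : C ⥤ C) [T.Faithful] [T.CommShift ℤ] [T.IsTriangulated]
    -- `T` is weight-exact:
    (hle : ∀ X ∈ w.le, T.obj X ∈ w.le) (hge : ∀ X ∈ w.ge, T.obj X ∈ w.ge) :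
    (∀ X : C, (X ∈ w.le ∧ T.essImage X) ↔ ∃ Y ∈ w.le, Nonempty (T.obj Y ≅ X)) ∧
    (∀ X : C, (X ∈ w.ge ∧ T.essImage X) ↔ ∃ Y ∈ w.ge, Nonempty (T.obj Y ≅ X)) ∧
    (∀ X : C, (X ∈ w.le ∩ w.ge ∧ T.essImage X) ↔
      ∃ Y ∈ w.le ∩ w.ge, Nonempty (T.obj Y ≅ X)) := by
  refine ⟨T.mem_and_essImage_iff_exists_obj_iso _ _ w.mem_le_of_iso hle
      (fun _ => w.mem_le_of_map_mem_le T hge),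
    T.mem_and_essImage_iff_exists_obj_iso _ _ w.mem_ge_of_iso hge
      (fun _ => w.mem_ge_of_map_mem_ge T hle),
    T.mem_and_essImage_iff_exists_obj_iso _ _
      (fun hX e => ⟨w.mem_le_of_iso hX.1 e, w.mem_ge_of_iso hX.2 e⟩)
      (fun Y hY => ⟨hle Y hY.1, hge Y hY.2⟩)
      (fun _ hY => ⟨w.mem_le_of_map_mem_le T hge hY.1, w.mem_ge_of_map_mem_ge T hle hY.2⟩)⟩
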